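/- Let ε > 0 and let F : [0,1] × {z ∈ ℂ : |z| < 1+ε} → ℂ² be continuous such that for each t ∈ [0,1] the map z ↦ F(t,z) is holomorphic. Then for every δ > 0 there exist an open neighborhood W ⊆ ℂ² of [0,1] × {|z| ≤ 1 + ε/2} (viewing [0,1] ⊂ ℝ ⊂ ℂ) and a holomorphic map 𝓕 : W → ℂ² such that sup_{(t,z) ∈ [0,1] × {|z| ≤ 1+ε/2}} |𝓕(t,z) − F(t,z)| < δ and 𝓕(1,z) = F(1,z) for all |z| ≤ 1 + ε/2. -/

import Mathlib

/-!
Sample the family at the nodes `k / n` and interpolate in the parameter with the Bernstein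
polynomials `bₙₖ`. Since `t ↦ F(t, ·)` is a continuous path in the Banach space of continuous maps
on the closed disc, the Bernstein approximations `∑ₖ bₙₖ(t) F(k/n, ·)` converge to it uniformly
in `t`. Replacing the real variable `t` by a complex one gives `∑ₖ bₙₖ(w) F(k/n, z)`, which is
jointly holomorphic, and at `w = 1` only the term `F(1, z)` survives.
-/

open Metric Set

open scoped unitInterval

theorem ContinuousMap.exists_norm_sum_bernstein_smul_sub_lt {Y E : Type*} [TopologicalSpace Y]
    [CompactSpace Y] [NormedAddCommGroup E] [NormedSpace ℝ E] (f : C(I × Y, E))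
    {δ : ℝ} (hδ : 0 < δ) :
    ∃ n ≠ 0, ∀ x y,
      ‖∑ k : Fin (n + 1), bernstein n k x • f (bernstein.z k, y) - f (x, y)‖ < δ := by
  obtain ⟨N, hN⟩ := Metric.tendsto_atTop.1 (bernsteinApproximation_uniform f.curry) δ hδ
  refine ⟨N + 1, N.succ_ne_zero, fun x y => ?_⟩
  calc _ = ‖(bernsteinApproximation (N + 1) f.curry - f.curry) x y‖ := by
        simp [bernsteinApproximation.apply]
    _ ≤ ‖bernsteinApproximation (N + 1) f.curry - f.curry‖ :=
        ((bernsteinApproximation (N + 1) f.curry - f.curry) x).norm_coe_le_norm y |>.trans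
          (ContinuousMap.norm_coe_le_norm _ x)
    _ < δ := by simpa [dist_eq_norm] using hN (N + 1) N.le_succ

noncomputable def bernsteinFamily {E : Type*} [AddCommGroup E] [Module ℂ E] (n : ℕ)
    (F : ℝ → ℂ → E) (p : ℂ × ℂ) : E :=
  ∑ k : Fin (n + 1), (bernsteinPolynomial ℂ n k).eval p.1 • F (k / n) p.2

section BernsteinFamily

variable {E : Type*} [NormedAddCommGroup E] [NormedSpace ℂ E]

theorem bernsteinPolynomial_eval_ofReal (n k : ℕ) (x : I) :
    (bernsteinPolynomial ℂ n k).eval (x : ℂ) = bernstein n k x := by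
  simp [bernsteinPolynomial, bernstein_apply]

theorem bernsteinFamily_ofReal (n : ℕ) (F : ℝ → ℂ → E) (x : I) (z : ℂ) :
    bernsteinFamily n F (x, z) = ∑ k : Fin (n + 1), bernstein n k x • F (bernstein.z k) z := by
  simp [bernsteinFamily, bernsteinPolynomial_eval_ofReal, bernstein.z]

theorem bernsteinFamily_one {n : ℕ} (hn : n ≠ 0) (F : ℝ → ℂ → E) (z : ℂ) :
    bernsteinFamily n F (1, z) = F 1 z := by
  rw [bernsteinFamily, Fin.sum_univ_castSucc, Finset.sum_eq_zero fun k _ => by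
    simp [bernsteinPolynomial.eval_at_1, k.isLt.ne]]
  simp [bernsteinPolynomial.eval_at_1, hn]

theorem differentiableOn_bernsteinFamily (n : ℕ) {F : ℝ → ℂ → E} {U : Set ℂ}
    (hF : ∀ t ∈ Icc (0 : ℝ) 1, DifferentiableOn ℂ (F t) U) :
    DifferentiableOn ℂ (bernsteinFamily n F) (univ ×ˢ U) := by
  refine DifferentiableOn.fun_sum fun k _ => DifferentiableOn.smul ?_ ?_
  · exact ((Polynomial.differentiable _).comp (𝕜 := ℂ) differentiable_fst).differentiableOn
  · exact (hF _ (bernstein.z k).2).comp differentiable_snd.differentiableOn fun p hp => hp.2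

end BernsteinFamily

theorem family_of_discs_joint_holomorphic_approximation
    (ε : ℝ) (hε : 0 < ε) (F : ℝ → ℂ → ℂ × ℂ)
    (hFcont : ContinuousOn (fun q : ℝ × ℂ => F q.1 q.2)
      (Icc (0 : ℝ) 1 ×ˢ ball (0 : ℂ) (1 + ε)))
    (hFhol : ∀ t ∈ Icc (0 : ℝ) 1, DifferentiableOn ℂ (F t) (ball (0 : ℂ) (1 + ε)))
    (δ : ℝ) (hδ : 0 < δ) :
    ∃ W : Set (ℂ × ℂ), IsOpen W ∧
      ((Complex.ofReal '' Icc (0 : ℝ) 1) ×ˢ closedBall (0 : ℂ) (1 + ε / 2)) ⊆ W ∧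
      ∃ 𝓕 : ℂ × ℂ → ℂ × ℂ, DifferentiableOn ℂ 𝓕 W ∧
        (∀ t ∈ Icc (0 : ℝ) 1, ∀ z ∈ closedBall (0 : ℂ) (1 + ε / 2),
          ‖𝓕 ((t : ℂ), z) - F t z‖ < δ) ∧
        (∀ z ∈ closedBall (0 : ℂ) (1 + ε / 2), 𝓕 ((1 : ℂ), z) = F 1 z) := by
  have hball : closedBall (0 : ℂ) (1 + ε / 2) ⊆ ball 0 (1 + ε) :=
    closedBall_subset_ball (by linarith)
  let f : C(I × closedBall (0 : ℂ) (1 + ε / 2), ℂ × ℂ) :=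
    { toFun p := F p.1 p.2
      continuous_toFun := hFcont.comp_continuous (f := Prod.map Subtype.val Subtype.val)
        (by fun_prop) fun p => ⟨p.1.2, hball p.2.2⟩ }
  obtain ⟨n, hn, hf⟩ := f.exists_norm_sum_bernstein_smul_sub_lt hδ
  refine ⟨univ ×ˢ ball 0 (1 + ε), isOpen_univ.prod isOpen_ball,
    prod_mono (subset_univ _) hball, bernsteinFamily n F,
    differentiableOn_bernsteinFamily n hFhol, fun t ht z hz => ?_,
    fun z _ => bernsteinFamily_one hn F z⟩
  exact bernsteinFamily_ofReal n F ⟨t, ht⟩ z ▸ hf ⟨t, ht⟩ ⟨z, hz⟩
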